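/- arXiv:2101.02776 — 5 statements merged into one kernel-verified Lean document; each statement's English description precedes it below -/
import Mathlib

section
/- For an alphabet A ⊆ ℝ^d containing the origin and an integer p, the gauge_p function G_{A,p}(x) := inf{t ≥ 0 : x/t ∈ conv_p(A)} equals inf{Σ_{i=1}^p c_i : x = Σ_{i=1}^p c_i A_i, c_i ≥ 0, A_i ∈ A}. -/
open scoped BigOperators Pointwise ENNReal

noncomputable section

/-- `conv_p(A)`: the union of all slices of `conv(A)` formed by at most `p` atoms. -/
def convp {E : Type*} [AddCommGroup E] [Module ℝ E] (A : Set E) (p : ℕ) : Set E :=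
  ⋃ (a : Fin p → E) (_ : ∀ i, a i ∈ A), convexHull ℝ (Set.range a ∪ {0})

/-- The gauge_p function, defined via the sets `conv_p(A)`:
`G_{A,p}(x) = inf{ t ≥ 0 : x ∈ t • conv_p(A) }` (the convention `0/0 = 0` is captured by
`0 • S = {0}` for nonempty `S`).  The infimum of the empty set in `ℝ≥0∞` is `∞`. -/
def gaugepHull {E : Type*} [AddCommGroup E] [Module ℝ E] (A : Set E) (p : ℕ) (x : E) : ℝ≥0∞ :=
  sInf { t : ℝ≥0∞ | ∃ s : ℝ, 0 ≤ s ∧ x ∈ s • convp A p ∧ t = ENNReal.ofReal s }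

/-- The gauge_p function, defined via `p`-sparse conic decompositions. -/
def gaugep {E : Type*} [AddCommGroup E] [Module ℝ E] (A : Set E) (p : ℕ) (x : E) : ℝ≥0∞ :=
  sInf { t : ℝ≥0∞ | ∃ (c : Fin p → ℝ) (a : Fin p → E),
    (∀ i, 0 ≤ c i) ∧ (∀ i, a i ∈ A) ∧ x = ∑ i, c i • a i ∧
    t = ENNReal.ofReal (∑ i, c i) }

/-- Key lemma: a point of `conv({a_1,...,a_p} ∪ {0})` is a subconvex combination of the `a_i`. -/
lemma exists_subconvex_of_mem_convexHull {E : Type*} [AddCommGroup E] [Module ℝ E] {p : ℕ}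
    (a : Fin p → E) {y : E} (hy : y ∈ convexHull ℝ (Set.range a ∪ {0})) :
    ∃ c : Fin p → ℝ, (∀ i, 0 ≤ c i) ∧ (∑ i, c i) ≤ 1 ∧ y = ∑ i, c i • a i := by
  classical
  obtain ⟨ι, _, w, z, hw0, hw1, hz, hx⟩ := mem_convexHull_iff_exists_fintype.1 hy
  have hchoice : ∀ i : ι, z i = 0 ∨ ∃ j, a j = z i := by
    intro i
    rcases hz i with h | h
    · exact Or.inr h
    · exact Or.inl (by simpa using h)
  set g : ι → Option (Fin p) := fun i =>
    if h : ∃ j, a j = z i then some h.choose else none with hg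
  have hgsome : ∀ i j, g i = some j → a j = z i := by
    intro i j hij
    by_cases h : ∃ j, a j = z i
    · have : g i = some h.choose := by simp [hg, h]
      rw [this] at hij
      obtain rfl : h.choose = j := by simpa using hij
      exact h.choose_spec
    · simp [hg, h] at hij
  have hgnone : ∀ i, g i = none → z i = 0 := by
    intro i hi
    by_cases h : ∃ j, a j = z i
    · simp [hg, h] at hi
    · rcases hchoice i with h' | h'
      · exact h'
      · exact absurd h' h
  set c : Fin p → ℝ := fun j => ∑ i ∈ Finset.univ.filter (fun i => g i = some j), w i with hc
  have hfib : ∀ (f : ι → E),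
      ∑ o : Option (Fin p), ∑ i ∈ Finset.univ.filter (fun i => g i = o), f i
        = ∑ i, f i := by
    intro f
    exact Finset.sum_fiberwise_of_maps_to (fun i _ => Finset.mem_univ (g i)) f
  have hfibR : ∀ (f : ι → ℝ),
      ∑ o : Option (Fin p), ∑ i ∈ Finset.univ.filter (fun i => g i = o), f i
        = ∑ i, f i := by
    intro f
    exact Finset.sum_fiberwise_of_maps_to (fun i _ => Finset.mem_univ (g i)) f
  refine ⟨c, fun j => Finset.sum_nonneg fun i _ => hw0 i, ?_, ?_⟩
  · have h1 : ∑ o : Option (Fin p), ∑ i ∈ Finset.univ.filter (fun i => g i = o), w i = 1 := by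
      rw [hfibR]; exact hw1
    rw [Fintype.sum_option] at h1
    have h2 : 0 ≤ ∑ i ∈ Finset.univ.filter (fun i => g i = none), w i :=
      Finset.sum_nonneg fun i _ => hw0 i
    have : ∑ j, c j = ∑ j : Fin p,
        ∑ i ∈ Finset.univ.filter (fun i => g i = some j), w i := rfl
    linarith
  · have key : ∀ j : Fin p, c j • a j
        = ∑ i ∈ Finset.univ.filter (fun i => g i = some j), w i • z i := by
      intro j
      rw [hc]
      rw [Finset.sum_smul]
      refine Finset.sum_congr rfl fun i hi => ?_
      rw [Finset.mem_filter] at hi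
      rw [hgsome i j hi.2]
    calc y = ∑ i, w i • z i := hx.symm
      _ = ∑ o : Option (Fin p),
            ∑ i ∈ Finset.univ.filter (fun i => g i = o), w i • z i := (hfib _).symm
      _ = ∑ j : Fin p, c j • a j := by
          rw [Fintype.sum_option]
          have hnone : ∑ i ∈ Finset.univ.filter (fun i => g i = none), w i • z i = 0 := by
            refine Finset.sum_eq_zero fun i hi => ?_
            rw [Finset.mem_filter] at hi
            rw [hgnone i hi.2, smul_zero]
          rw [hnone, zero_add]
          exact Finset.sum_congr rfl fun j _ => (key j).symm

/-- `0 ∈ conv_p(A)` when `0 ∈ A`. -/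
lemma zero_mem_convp {E : Type*} [AddCommGroup E] [Module ℝ E] {A : Set E}
    (h0 : (0 : E) ∈ A) (p : ℕ) : (0 : E) ∈ convp A p := by
  refine Set.mem_iUnion.2 ⟨fun _ => 0, Set.mem_iUnion.2 ⟨fun _ => h0, ?_⟩⟩
  exact subset_convexHull ℝ _ (Or.inr rfl)

/-- For a bounded alphabet `A ⊆ ℝ^d` containing the origin, the two definitions of the
gauge_p function coincide. -/
theorem gaugepHull_eq_gaugep (d p : ℕ) (A : Set (EuclideanSpace ℝ (Fin d)))
    (h0 : (0 : EuclideanSpace ℝ (Fin d)) ∈ A) (hbdd : Bornology.IsBounded A)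
    (x : EuclideanSpace ℝ (Fin d)) :
    gaugepHull A p x = gaugep A p x := by
  classical
  refine le_antisymm (le_sInf ?_) (le_sInf ?_)
  · -- gaugepHull ≤ gaugep : every sparse decomposition gives a hull certificate
    rintro t ⟨c, a, hc, ha, hx, rfl⟩
    set s : ℝ := ∑ i, c i with hs
    have hs0 : 0 ≤ s := Finset.sum_nonneg fun i _ => hc i
    refine sInf_le ⟨s, hs0, ?_, rfl⟩
    rcases eq_or_lt_of_le hs0 with hse | hsp
    · -- s = 0 : all c i = 0, x = 0
      have hcall : ∀ i, c i = 0 := fun i =>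
        (Finset.sum_eq_zero_iff_of_nonneg fun i _ => hc i).1 hse.symm i (Finset.mem_univ i)
      have hx0 : x = 0 := by
        rw [hx]
        exact Finset.sum_eq_zero fun i _ => by rw [hcall i, zero_smul]
      rw [← hse, Set.zero_smul_set ⟨0, zero_mem_convp h0 p⟩, hx0]
      exact Set.zero_mem_zero
    · -- s > 0
      refine ⟨(s : ℝ)⁻¹ • x, ?_, ?_⟩
      · refine Set.mem_iUnion.2 ⟨a, Set.mem_iUnion.2 ⟨ha, ?_⟩⟩
        refine mem_convexHull_of_exists_fintype (fun i => c i / s) a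
          (fun i => div_nonneg (hc i) hs0) ?_ (fun i => Or.inl ⟨i, rfl⟩) ?_
        · rw [← Finset.sum_div, ← hs, div_self hsp.ne']
        · rw [hx, Finset.smul_sum]
          refine Finset.sum_congr rfl fun i _ => ?_
          show (c i / s) • a i = s⁻¹ • c i • a i
          rw [smul_smul, div_eq_inv_mul]
      · show s • s⁻¹ • x = x
        rw [smul_inv_smul₀ hsp.ne']
  · -- gaugep ≤ gaugepHull
    rintro t ⟨s, hs0, hx, rfl⟩
    obtain ⟨y, hy, rfl⟩ := hx
    obtain ⟨a, hmem⟩ := Set.mem_iUnion.1 hy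
    obtain ⟨ha, hyhull⟩ := Set.mem_iUnion.1 hmem
    obtain ⟨c, hc0, hc1, rfl⟩ := exists_subconvex_of_mem_convexHull a hyhull
    refine sInf_le_of_le (b := ENNReal.ofReal (∑ i, s * c i)) ?_ ?_
    · refine ⟨fun i => s * c i, a, fun i => mul_nonneg hs0 (hc0 i), ha, ?_, rfl⟩
      show s • ∑ i, c i • a i = ∑ i, (s * c i) • a i
      rw [Finset.smul_sum]
      exact Finset.sum_congr rfl fun i _ => by rw [smul_smul]
    · apply ENNReal.ofReal_le_ofReal
      rw [← Finset.mul_sum]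
      calc s * ∑ i, c i ≤ s * 1 := mul_le_mul_of_nonneg_left hc1 hs0
        _ = s := mul_one s
end
end

section
/- The gauge_p functions are nested: G_{A,1}(x) ≥ G_{A,2}(x) ≥ ... ≥ G_{A,d+1}(x) = G_A(x) for every x ∈ ℝ^d, where G_A is the classical gauge function of A. -/
open scoped BigOperators Pointwise ENNReal

noncomputable section

/-- The classical gauge function `G_A(x) = inf{ t ≥ 0 : x ∈ t • conv(A) }`
(the convention `0/0 = 0` is captured by `0 • S = {0}` for nonempty `S`). -/
def gaugeFn {E : Type*} [AddCommGroup E] [Module ℝ E] (A : Set E) (x : E) : ℝ≥0∞ :=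
  sInf { t : ℝ≥0∞ | ∃ s : ℝ, 0 ≤ s ∧ x ∈ s • convexHull ℝ A ∧ t = ENNReal.ofReal s }

private lemma sum_extend_aux {M : Type*} [AddCommMonoid M] {n m : ℕ} (h : n ≤ m)
    (f : Fin n → M) :
    ∑ i : Fin m, (if h' : (i : ℕ) < n then f ⟨i, h'⟩ else 0) = ∑ i, f i := by
  set g : ℕ → M := fun i => if h' : i < n then f ⟨i, h'⟩ else 0 with hg
  calc ∑ i : Fin m, g i.val = ∑ i ∈ Finset.range m, g i := Fin.sum_univ_eq_sum_range g m
    _ = ∑ i ∈ Finset.range n, g i := (Finset.sum_subset (Finset.range_subset_range.2 h)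
        (fun i _ hi => by simp [hg, Finset.mem_range.not.1 hi])).symm
    _ = ∑ i : Fin n, g i.val := (Fin.sum_univ_eq_sum_range g n).symm
    _ = ∑ i, f i := Finset.sum_congr rfl fun i _ => by simp [hg, i.isLt]

private lemma exists_fin_rep {d : ℕ} {A : Set (EuclideanSpace ℝ (Fin d))}
    (h0 : (0 : EuclideanSpace ℝ (Fin d)) ∈ A) {y : EuclideanSpace ℝ (Fin d)}
    (hy : y ∈ convexHull ℝ A) :
    ∃ (c : Fin (d + 1) → ℝ) (a : Fin (d + 1) → EuclideanSpace ℝ (Fin d)),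
      (∀ i, 0 ≤ c i) ∧ (∀ i, a i ∈ A) ∧ (∑ i, c i) = 1 ∧ y = ∑ i, c i • a i := by
  obtain ⟨ι, hι, z, w, hz, hai, hw, hw1, hwz⟩ := eq_pos_convex_span_of_mem_convexHull hy
  set N := Fintype.card ι with hNdef
  have hN : N ≤ d + 1 := by
    have h1 := hai.card_le_finrank_succ (k := ℝ)
    have h2 : Module.finrank ℝ (vectorSpan ℝ (Set.range z)) ≤
        Module.finrank ℝ (EuclideanSpace ℝ (Fin d)) := Submodule.finrank_le _
    have h3 : Module.finrank ℝ (EuclideanSpace ℝ (Fin d)) = d := finrank_euclideanSpace_fin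
    omega
  let e : Fin N ≃ ι := (Fintype.equivFin ι).symm
  refine ⟨fun i => if h : (i : ℕ) < N then w (e ⟨i, h⟩) else 0,
    fun i => if h : (i : ℕ) < N then z (e ⟨i, h⟩) else 0, ?_, ?_, ?_, ?_⟩
  · intro i; dsimp only; split
    · exact (hw _).le
    · exact le_refl 0
  · intro i; dsimp only; split
    · exact hz (Set.mem_range_self _)
    · exact h0
  · rw [sum_extend_aux hN (fun j : Fin N => w (e j))]
    rw [Equiv.sum_comp e w]; exact hw1
  · have : ∀ i : Fin (d + 1),
        (if h : (i : ℕ) < N then w (e ⟨i, h⟩) else 0) •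
          (if h : (i : ℕ) < N then z (e ⟨i, h⟩) else 0) =
        (if h : (i : ℕ) < N then (fun j : Fin N => w (e j) • z (e j)) ⟨i, h⟩ else 0) := by
      intro i; split <;> simp
    rw [Finset.sum_congr rfl fun i _ => this i,
      sum_extend_aux hN (fun j : Fin N => w (e j) • z (e j)),
      Equiv.sum_comp e (fun i => w i • z i), hwz]

/-- The gauge_p functions are nested:
`G_{A,1}(x) ≥ G_{A,2}(x) ≥ ⋯ ≥ G_{A,d+1}(x) = G_A(x)`. -/
theorem gaugep_antitone_and_eq_gauge (d : ℕ) (A : Set (EuclideanSpace ℝ (Fin d)))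
    (h0 : (0 : EuclideanSpace ℝ (Fin d)) ∈ A) (hbdd : Bornology.IsBounded A)
    (x : EuclideanSpace ℝ (Fin d)) :
    (∀ p : ℕ, gaugep A (p + 1) x ≤ gaugep A p x) ∧ gaugep A (d + 1) x = gaugeFn A x := by
  constructor
  · intro p
    apply sInf_le_sInf
    rintro t ⟨c, a, hc, ha, hx, ht⟩
    refine ⟨Fin.snoc c 0, Fin.snoc a 0, ?_, ?_, ?_, ?_⟩
    · intro i
      refine Fin.lastCases ?_ (fun j => ?_) i <;> simp [hc]
    · intro i
      refine Fin.lastCases ?_ (fun j => ?_) i <;> simp [h0, ha]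
    · rw [Fin.sum_univ_castSucc]; simpa using hx
    · rw [Fin.sum_univ_castSucc]; simpa using ht
  · apply le_antisymm
    · apply sInf_le_sInf
      rintro t ⟨s, hs0, hx, ht⟩
      obtain ⟨y, hy, rfl⟩ := hx
      obtain ⟨c, a, hc, ha, hsum, hyeq⟩ := exists_fin_rep h0 hy
      refine ⟨fun i => s * c i, a, fun i => mul_nonneg hs0 (hc i), ha, ?_, ?_⟩
      · rw [hyeq]
        show s • (∑ i, c i • a i) = ∑ i, (s * c i) • a i
        rw [Finset.smul_sum]
        exact Finset.sum_congr rfl fun i _ => (smul_smul s (c i) (a i))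
      · rw [← Finset.mul_sum, hsum, mul_one]; exact ht
    · apply sInf_le_sInf
      rintro t ⟨c, a, hc, ha, hx, ht⟩
      set s : ℝ := ∑ i, c i with hs
      have hs0 : 0 ≤ s := Finset.sum_nonneg fun i _ => hc i
      by_cases hsz : s = 0
      · have hsum0 : ∑ i, c i = 0 := by rw [← hs]; exact hsz
        have hall : ∀ i ∈ Finset.univ, c i = 0 :=
          (Finset.sum_eq_zero_iff_of_nonneg fun i _ => hc i).1 hsum0
        have hx0 : x = 0 := by
          rw [hx]
          exact Finset.sum_eq_zero fun i hi => by rw [hall i hi, zero_smul]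
        refine ⟨0, le_refl 0, ?_, by rw [ht, hsz]⟩
        rw [hx0]
        exact ⟨0, subset_convexHull ℝ A h0, (zero_smul ℝ _)⟩
      · have hspos : 0 < s := lt_of_le_of_ne hs0 (Ne.symm hsz)
        refine ⟨s, hs0, ?_, ht⟩
        have hmem : Finset.univ.centerMass c a ∈ convexHull ℝ A :=
          Finset.centerMass_mem_convexHull _ (fun i _ => hc i) (hs ▸ hspos)
            (fun i _ => ha i)
        refine ⟨Finset.univ.centerMass c a, hmem, ?_⟩
        show s • Finset.univ.centerMass c a = x
        rw [Finset.centerMass, ← hs, smul_smul, mul_inv_cancel₀ hsz, one_smul, hx]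
end
end

section
/- Exact recovery under correctness certificates (nonconvex case): Consider the exact setup y = L(x♯) where x♯ has an r-sparse decomposition in A, and let p ≥ r. Assume 0 ∈ A and A is bounded, and G_{A,p}(x♯) > 0. Suppose for every slice S ∈ slice_p(A): (i) if x♯/G_{A,p}(x♯) ∈ S then L is injective on lin(S); (ii) if x♯/G_{A,p}(x♯) ∉ S then there exists Q_S ∈ range(L*) with ⟨Q_S, x − x♯/G_{A,p}(x♯)⟩ < 0 for all x ∈ S. Then any minimizer x̂ = Σ_{i=1}^p ĉ_i Â_i of min{‖Σ_{i=1}^p c_i L(A_i) − y‖₂² : Σ c_i ≤ G_{A,p}(x♯), c_i ≥ 0, A_i ∈ A} satisfies x̂ = x♯. -/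
open scoped BigOperators Pointwise ENNReal RealInnerProductSpace

set_option maxHeartbeats 1000000

noncomputable section

/-- A subconvex combination of points of `range a` lies in `conv (range a ∪ {0})`. -/
lemma sum_mem_hull_aux {E : Type*} [AddCommGroup E] [Module ℝ E] {p : ℕ}
    (c : Fin p → ℝ) (a : Fin p → E) (hc : ∀ i, 0 ≤ c i) (hs : ∑ i, c i ≤ 1) :
    ∑ i, c i • a i ∈ convexHull ℝ (Set.range a ∪ {0}) := by
  have hconv : Convex ℝ (convexHull ℝ (Set.range a ∪ {0})) := convex_convexHull ℝ _
  have h0m : (0 : E) ∈ convexHull ℝ (Set.range a ∪ {0}) :=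
    subset_convexHull ℝ _ (Or.inr rfl)
  have ham : ∀ i, a i ∈ convexHull ℝ (Set.range a ∪ {0}) :=
    fun i => subset_convexHull ℝ _ (Or.inl ⟨i, rfl⟩)
  have key := hconv.sum_mem (t := (Finset.univ : Finset (Option (Fin p))))
    (w := fun o => Option.elim o (1 - ∑ i, c i) c)
    (z := fun o => Option.elim o 0 a)
    (by rintro (_|i) _
        · simpa using hs
        · exact hc i)
    (by simp [Fintype.sum_option])
    (by rintro (_|i) _
        exacts [h0m, ham i])
  simpa [Fintype.sum_option] using key

/-- Exact recovery under correctness certificates, nonconvex case (Lemma 3 of the paper):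
in the exact setup `y = L x♯` with `x♯` `r`-sparse in `A` and `p ≥ r`, if on every slice
`S = conv({A_1,…,A_p} ∪ {0})` either `L` is injective on `lin(S)` (when `x♯/G_{A,p}(x♯) ∈ S`)
or `x♯/G_{A,p}(x♯)` is separated from `S` along `range(L*)` (when it is not in `S`), then the
model returned by the gauge_p machine equals `x♯`. -/
theorem nonconvex_exact_recovery (d m r p : ℕ) (hrp : r ≤ p)
    (A : Set (EuclideanSpace ℝ (Fin d)))
    (h0 : (0 : EuclideanSpace ℝ (Fin d)) ∈ A) (hbdd : Bornology.IsBounded A)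
    (L : EuclideanSpace ℝ (Fin d) →L[ℝ] EuclideanSpace ℝ (Fin m))
    (xs : EuclideanSpace ℝ (Fin d))
    (cs : Fin r → ℝ) (as : Fin r → EuclideanSpace ℝ (Fin d))
    (hcs : ∀ i, 0 ≤ cs i) (has : ∀ i, as i ∈ A) (hxs : xs = ∑ i, cs i • as i)
    (g : ℝ) (hg : 0 < g) (hgauge : gaugep A p xs = ENNReal.ofReal g)
    (hcert : ∀ a : Fin p → EuclideanSpace ℝ (Fin d), (∀ i, a i ∈ A) →
      (g⁻¹ • xs ∈ convexHull ℝ (Set.range a ∪ {0}) →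
        ∀ v ∈ Submodule.span ℝ (convexHull ℝ (Set.range a ∪ {0})), L v = 0 → v = 0) ∧
      (g⁻¹ • xs ∉ convexHull ℝ (Set.range a ∪ {0}) →
        ∃ q : EuclideanSpace ℝ (Fin m), ∀ x ∈ convexHull ℝ (Set.range a ∪ {0}),
          (⟪ContinuousLinearMap.adjoint L q, x - g⁻¹ • xs⟫ : ℝ) < 0))
    (chat : Fin p → ℝ) (ahat : Fin p → EuclideanSpace ℝ (Fin d))
    (hchat : ∀ i, 0 ≤ chat i) (hahat : ∀ i, ahat i ∈ A) (hsum : ∑ i, chat i ≤ g)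
    (hopt : ∀ (c : Fin p → ℝ) (a : Fin p → EuclideanSpace ℝ (Fin d)),
      (∀ i, 0 ≤ c i) → (∀ i, a i ∈ A) → ∑ i, c i ≤ g →
      ‖(∑ i, chat i • L (ahat i)) - L xs‖ ≤ ‖(∑ i, c i • L (a i)) - L xs‖) :
    ∑ i, chat i • ahat i = xs := by
  classical
  set xh := ∑ i, chat i • ahat i with hxh
  have hLsum : (∑ i, chat i • L (ahat i)) = L xh := by
    rw [hxh, map_sum]; simp [map_smul]
  -- Step 1: L xh = L xs
  have hLeq : L xh = L xs := by
    have hN : (0:ℝ) ≤ ‖L xs‖ := norm_nonneg _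
    have key : ∀ ε : ℝ, 0 < ε → ‖L xh - L xs‖ ≤ ε := by
      intro ε hε
      set δ : ℝ := ε * g / (‖L xs‖ + 1) with hδdef
      have hδ : 0 < δ := by positivity
      have hlt : gaugep A p xs < ENNReal.ofReal (g + δ) := by
        rw [hgauge]
        exact (ENNReal.ofReal_lt_ofReal_iff (by linarith)).mpr (by linarith)
      rw [gaugep] at hlt
      obtain ⟨t, ⟨c, a, hc, ha, hx, htval⟩, htlt⟩ := sInf_lt_iff.mp hlt
      set s : ℝ := ∑ i, c i with hsdef
      have hs0 : 0 ≤ s := Finset.sum_nonneg fun i _ => hc i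
      have hslt : s < g + δ := by
        rw [htval] at htlt
        exact (ENNReal.ofReal_lt_ofReal_iff (by linarith)).mp htlt
      by_cases hsg : s ≤ g
      · have hzero : (∑ i, c i • L (a i)) - L xs = 0 := by
          have : (∑ i, c i • L (a i)) = L xs := by
            rw [hx, map_sum]; simp [map_smul]
          rw [this, sub_self]
        have := hopt c a hc ha hsg
        rw [hLsum] at this
        rw [hzero, norm_zero] at this
        linarith [this]
      · push_neg at hsg
        have hspos : 0 < s := lt_trans hg hsg
        set c' : Fin p → ℝ := fun i => (g / s) * c i with hc'def
        have hc' : ∀ i, 0 ≤ c' i := fun i => by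
          have := hc i; positivity
        have hc'sum : ∑ i, c' i = g := by
          rw [hc'def, ← Finset.mul_sum, ← hsdef, div_mul_cancel₀ _ (ne_of_gt hspos)]
        have hobj : (∑ i, c' i • L (a i)) = (g / s) • L xs := by
          have : (∑ i, c' i • L (a i)) = (g / s) • ∑ i, c i • L (a i) := by
            rw [Finset.smul_sum]
            exact Finset.sum_congr rfl fun i _ => by rw [hc'def, smul_smul]
          rw [this]
          congr 1
          rw [hx, map_sum]; simp [map_smul]
        have hle := hopt c' a hc' ha (le_of_eq hc'sum)
        rw [hLsum, hobj] at hle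
        have hnorm : ‖(g / s) • L xs - L xs‖ = (1 - g / s) * ‖L xs‖ := by
          have h1 : (g / s) • L xs - L xs = (g / s - 1) • L xs := by
            rw [sub_smul, one_smul]
          rw [h1, norm_smul, Real.norm_eq_abs, abs_of_nonpos (by
            have : g / s < 1 := (div_lt_one hspos).mpr hsg
            linarith)]
          ring
        rw [hnorm] at hle
        have hgs1 : (s - g) / s ≤ δ / g := by
          rw [div_le_div_iff₀ hspos hg]
          nlinarith
        have h1gs : 1 - g / s = (s - g) / s := by
          field_simp
        have hfinal : (1 - g / s) * ‖L xs‖ ≤ ε := by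
          rw [h1gs]
          have h2 : (s - g) / s * ‖L xs‖ ≤ δ / g * ‖L xs‖ :=
            mul_le_mul_of_nonneg_right hgs1 hN
          have h3 : δ / g = ε / (‖L xs‖ + 1) := by
            rw [hδdef]; field_simp
          have h4 : ε / (‖L xs‖ + 1) * ‖L xs‖ ≤ ε := by
            rw [div_mul_eq_mul_div, div_le_iff₀ (by linarith)]
            nlinarith
          calc (s - g) / s * ‖L xs‖ ≤ δ / g * ‖L xs‖ := h2
            _ = ε / (‖L xs‖ + 1) * ‖L xs‖ := by rw [h3]
            _ ≤ ε := h4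
        linarith
    have : ‖L xh - L xs‖ ≤ 0 := le_of_forall_pos_le_add (by
      intro ε hε; simpa using key ε hε)
    have : ‖L xh - L xs‖ = 0 := le_antisymm this (norm_nonneg _)
    exact sub_eq_zero.mp (norm_eq_zero.mp this)
  -- Step 2: xh / g is in the slice
  have hxhS : g⁻¹ • xh ∈ convexHull ℝ (Set.range ahat ∪ {0}) := by
    have h1 : g⁻¹ • xh = ∑ i, (g⁻¹ * chat i) • ahat i := by
      rw [hxh, Finset.smul_sum]
      exact Finset.sum_congr rfl fun i _ => by rw [smul_smul]
    rw [h1]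
    apply sum_mem_hull_aux _ _ (fun i => by have := hchat i; positivity)
    rw [← Finset.mul_sum]
    calc g⁻¹ * ∑ i, chat i ≤ g⁻¹ * g :=
          mul_le_mul_of_nonneg_left hsum (by positivity)
      _ = 1 := inv_mul_cancel₀ (ne_of_gt hg)
  -- Step 3: xs / g is in the slice
  have hxsS : g⁻¹ • xs ∈ convexHull ℝ (Set.range ahat ∪ {0}) := by
    by_contra hcon
    obtain ⟨q, hq⟩ := (hcert ahat hahat).2 hcon
    have hq' := hq _ hxhS
    have h0' : (⟪ContinuousLinearMap.adjoint L q, g⁻¹ • xh - g⁻¹ • xs⟫ : ℝ) = 0 := by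
      rw [ContinuousLinearMap.adjoint_inner_left, map_sub, map_smul, map_smul, hLeq,
        sub_self, inner_zero_right]
    rw [h0'] at hq'
    exact lt_irrefl 0 hq'
  -- Step 4: conclude via injectivity on the span
  have hinj := (hcert ahat hahat).1 hxsS
  have hmemh : xh ∈ Submodule.span ℝ (convexHull ℝ (Set.range ahat ∪ {0})) := by
    have h1 := Submodule.smul_mem _ g (Submodule.subset_span hxhS)
    rwa [smul_inv_smul₀ (ne_of_gt hg)] at h1
  have hmems : xs ∈ Submodule.span ℝ (convexHull ℝ (Set.range ahat ∪ {0})) := by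
    have h1 := Submodule.smul_mem _ g (Submodule.subset_span hxsS)
    rwa [smul_inv_smul₀ (ne_of_gt hg)] at h1
  have := hinj (xh - xs) (Submodule.sub_mem _ hmemh hmems)
    (by rw [map_sub, hLeq, sub_self])
  exact sub_eq_zero.mp this
end
end

section
/- For closed cones K and K' in ℝ^d, the three cone angles satisfy ψ(K)/2 ≤ φ(K) ≤ ∠K ≤ ψ(K), where cos(∠K) = max_{u∈K∩S^{d−1}} min_{u'∈K∩S^{d−1}} ⟨u,u'⟩, cos(φ(K)) = max_{u∈S^{d−1}} min_{u'∈K∩S^{d−1}} ⟨u,u'⟩, and cos(ψ(K)) = min_{u,u'∈K∩S^{d−1}} ⟨u,u'⟩. -/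
/-!
All three cosines are extremal values of `⟪u, u'⟫` over the unit cross-section
`C = K ∩ S^{d-1}`. The inequalities `φ(K) ≤ ∠K ≤ ψ(K)` only compare a supremum over `C` with
one over the larger sphere, and a minimum over pairs with a value at a single pair.
For `ψ(K)/2 ≤ φ(K)`: `C` is compact, so `ψ(K)` is the angle between some `v, w ∈ C`, and by
the triangle inequality for angles every unit vector makes an angle of at least `ψ(K)/2` with
`v` or with `w`.
-/

open scoped BigOperators RealInnerProductSpace

noncomputable section

variable {d : ℕ}

/-- `cos(∠K) = max_{u ∈ K ∩ S} min_{u' ∈ K ∩ S} ⟨u, u'⟩`. -/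
def coneAngle (K : Set (EuclideanSpace ℝ (Fin d))) : ℝ :=
  Real.arccos (sSup ((fun u => sInf ((fun u'ₑ => (⟪u, u'ₑ⟫ : ℝ)) ''
    (K ∩ Metric.sphere 0 1))) '' (K ∩ Metric.sphere 0 1)))

/-- `cos(φ(K)) = max_{u ∈ S^{d−1}} min_{u' ∈ K ∩ S} ⟨u, u'⟩`. -/
def conePhi (K : Set (EuclideanSpace ℝ (Fin d))) : ℝ :=
  Real.arccos (sSup ((fun u => sInf ((fun u'ₑ => (⟪u, u'ₑ⟫ : ℝ)) ''
    (K ∩ Metric.sphere 0 1))) '' (Metric.sphere (0 : EuclideanSpace ℝ (Fin d)) 1)))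

/-- `cos(ψ(K)) = min_{u, u' ∈ K ∩ S} ⟨u, u'⟩`. -/
def conePsi (K : Set (EuclideanSpace ℝ (Fin d))) : ℝ :=
  Real.arccos (sInf { r : ℝ | ∃ u ∈ K ∩ Metric.sphere 0 1, ∃ u' ∈ K ∩ Metric.sphere 0 1,
    r = (⟪u, u'⟫ : ℝ) })

open Real Set Metric InnerProductGeometry

section

variable {V : Type*} [NormedAddCommGroup V] [InnerProductSpace ℝ V]

theorem min_cos_angle_le_cos_half_angle (u v w : V) :
    min (cos (angle u v)) (cos (angle u w)) ≤ cos (angle v w / 2) := by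
  have htri : angle v w ≤ angle u v + angle u w := by
    simpa only [angle_comm v u] using angle_le_angle_add_angle v u w
  have hcos (x : V) (h : angle v w / 2 ≤ angle u x) : cos (angle u x) ≤ cos (angle v w / 2) :=
    cos_le_cos_of_nonneg_of_le_pi (by linarith [angle_nonneg v w]) (angle_le_pi u x) h
  rcases le_total (angle v w / 2) (angle u v) with h | h
  · exact min_le_of_left_le (hcos v h)
  · exact min_le_of_right_le (hcos w (by linarith))

def infInner (C : Set V) (u : V) : ℝ :=
  sInf ((fun u' => ⟪u, u'⟫) '' C)

def pairwiseInners (C : Set V) : Set ℝ :=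
  {r | ∃ u ∈ C, ∃ u' ∈ C, r = ⟪u, u'⟫}

variable {C : Set V}

theorem infInner_le (hC : C ⊆ sphere 0 1) (u : V) {u' : V} (hu' : u' ∈ C) :
    infInner C u ≤ ⟪u, u'⟫ := by
  refine csInf_le ⟨-‖u‖, ?_⟩ ⟨u', hu', rfl⟩
  rintro _ ⟨x, hx, rfl⟩
  simpa [mem_sphere_zero_iff_norm.1 (hC hx)] using neg_le_of_abs_le (abs_real_inner_le_norm u x)

theorem infInner_le_cos_half_angle (hC : C ⊆ sphere 0 1) {u v w : V} (hu : ‖u‖ = 1)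
    (hv : v ∈ C) (hw : w ∈ C) : infInner C u ≤ cos (angle v w / 2) := by
  have hunit {x : V} (hx : x ∈ C) : ⟪u, x⟫ = cos (angle u x) :=
    inner_eq_cos_angle_of_norm_eq_one hu (mem_sphere_zero_iff_norm.1 (hC hx))
  calc infInner C u ≤ min ⟪u, v⟫ ⟪u, w⟫ :=
        le_min (infInner_le hC u hv) (infInner_le hC u hw)
    _ = min (cos (angle u v)) (cos (angle u w)) := by rw [hunit hv, hunit hw]
    _ ≤ cos (angle v w / 2) := min_cos_angle_le_cos_half_angle u v w

theorem bddAbove_infInner_image_sphere (hC : C ⊆ sphere 0 1) (hne : C.Nonempty) :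
    BddAbove (infInner C '' sphere 0 1) := by
  obtain ⟨u₀, hu₀⟩ := hne
  refine ⟨1, ?_⟩
  rintro _ ⟨u, hu, rfl⟩
  calc infInner C u ≤ ⟪u, u₀⟫ := infInner_le hC u hu₀
    _ ≤ ‖u‖ * ‖u₀‖ := real_inner_le_norm u u₀
    _ = 1 := by rw [mem_sphere_zero_iff_norm.1 hu, mem_sphere_zero_iff_norm.1 (hC hu₀), one_mul]

theorem sSup_infInner_le_sSup_infInner_sphere (hC : C ⊆ sphere 0 1) (hne : C.Nonempty) :
    sSup (infInner C '' C) ≤ sSup (infInner C '' sphere 0 1) :=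
  csSup_le_csSup (bddAbove_infInner_image_sphere hC hne) (hne.image _) (image_mono hC)

theorem sInf_pairwiseInners_le_sSup_infInner (hC : C ⊆ sphere 0 1) (hne : C.Nonempty) :
    sInf (pairwiseInners C) ≤ sSup (infInner C '' C) := by
  obtain ⟨u₀, hu₀⟩ := hne
  have hbdd : BddBelow (pairwiseInners C) := by
    refine ⟨-1, ?_⟩
    rintro _ ⟨u, hu, u', hu', rfl⟩
    have h := neg_le_of_abs_le (abs_real_inner_le_norm u u')
    rwa [mem_sphere_zero_iff_norm.1 (hC hu), mem_sphere_zero_iff_norm.1 (hC hu'), one_mul] at h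
  have hle : sInf (pairwiseInners C) ≤ infInner C u₀ := by
    refine le_csInf ((nonempty_of_mem hu₀).image _) ?_
    rintro _ ⟨u', hu', rfl⟩
    exact csInf_le hbdd ⟨u₀, hu₀, u', hu', rfl⟩
  exact hle.trans <| le_csSup ((bddAbove_infInner_image_sphere hC ⟨u₀, hu₀⟩).mono
    (image_mono hC)) ⟨u₀, hu₀, rfl⟩

theorem pairwiseInners_eq_image (C : Set V) :
    pairwiseInners C = (fun p : V × V => ⟪p.1, p.2⟫) '' (C ×ˢ C) := by
  ext r
  constructor
  · rintro ⟨u, hu, u', hu', rfl⟩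
    exact ⟨(u, u'), ⟨hu, hu'⟩, rfl⟩
  · rintro ⟨⟨u, u'⟩, ⟨hu, hu'⟩, rfl⟩
    exact ⟨u, hu, u', hu', rfl⟩

theorem exists_angle_eq_arccos_sInf_pairwiseInners (hC : C ⊆ sphere 0 1) (hcomp : IsCompact C)
    (hne : C.Nonempty) : ∃ v ∈ C, ∃ w ∈ C, arccos (sInf (pairwiseInners C)) = angle v w := by
  have hmem : sInf (pairwiseInners C) ∈ pairwiseInners C := by
    rw [pairwiseInners_eq_image]
    exact ((hcomp.prod hcomp).image continuous_inner).sInf_mem ((hne.prod hne).image _)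
  obtain ⟨v, hv, w, hw, hvw⟩ := hmem
  refine ⟨v, hv, w, hw, ?_⟩
  rw [hvw, inner_eq_cos_angle_of_norm_eq_one (mem_sphere_zero_iff_norm.1 (hC hv))
    (mem_sphere_zero_iff_norm.1 (hC hw)), arccos_cos (angle_nonneg v w) (angle_le_pi v w)]

theorem sSup_infInner_sphere_le_cos_half (hC : C ⊆ sphere 0 1) (hcomp : IsCompact C)
    (hne : C.Nonempty) :
    sSup (infInner C '' sphere 0 1) ≤ cos (arccos (sInf (pairwiseInners C)) / 2) := by
  obtain ⟨v, hv, w, hw, hψ⟩ := exists_angle_eq_arccos_sInf_pairwiseInners hC hcomp hne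
  refine csSup_le ((nonempty_of_mem (hC hv)).image _) ?_
  rintro _ ⟨u, hu, rfl⟩
  rw [hψ]
  exact infInner_le_cos_half_angle hC (mem_sphere_zero_iff_norm.1 hu) hv hw

end

theorem cone_angles_relation_general (K : Set (EuclideanSpace ℝ (Fin d)))
    (hclosed : IsClosed K)
    (hne : (K ∩ Metric.sphere 0 1).Nonempty) :
    conePsi K / 2 ≤ conePhi K ∧ conePhi K ≤ coneAngle K ∧ coneAngle K ≤ conePsi K := by
  have hC : K ∩ sphere 0 1 ⊆ sphere 0 1 := inter_subset_right
  have hcomp : IsCompact (K ∩ sphere 0 1) := (isCompact_sphere 0 1).inter_left hclosed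
  refine ⟨?_, antitone_arccos (sSup_infInner_le_sSup_infInner_sphere hC hne),
    antitone_arccos (sInf_pairwiseInners_le_sSup_infInner hC hne)⟩
  have hψ : 0 ≤ conePsi K ∧ conePsi K ≤ π := ⟨arccos_nonneg _, arccos_le_pi _⟩
  calc conePsi K / 2 = arccos (cos (conePsi K / 2)) :=
        (arccos_cos (by linarith) (by linarith)).symm
    _ ≤ conePhi K := antitone_arccos (sSup_infInner_sphere_le_cos_half hC hcomp hne)

/-- For a nonempty closed cone `K ⊆ ℝ^d`, the three cone angles satisfy
`ψ(K)/2 ≤ φ(K) ≤ ∠K ≤ ψ(K)`. -/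
theorem cone_angles_relation (K : Set (EuclideanSpace ℝ (Fin d)))
    (hclosed : IsClosed K)
    (hcone : ∀ t : ℝ, 0 < t → ∀ x ∈ K, t • x ∈ K)
    (hne : (K ∩ Metric.sphere 0 1).Nonempty) :
    conePsi K / 2 ≤ conePhi K ∧ conePhi K ≤ coneAngle K ∧ coneAngle K ≤ conePsi K :=
  cone_angles_relation_general K hclosed hne
end
end

section
/- For the spiral alphabet A = {(t cos(πt), t sin(πt)) : t ∈ [0,2]} ⊆ ℝ² and the 1-sparse model x♯ = (1/(4√2))·(1,1) ∈ A, the gauge function satisfies G_A(x♯) ≤ 5/(8√2) < 1 = G_{A,1}(x♯); in particular G_A(x♯) < G_{A,1}(x♯). -/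
open scoped BigOperators ENNReal

noncomputable section

/-- The classical gauge function, defined via conic decompositions of arbitrary length. -/
def gaugeSum {E : Type*} [AddCommGroup E] [Module ℝ E] (A : Set E) (x : E) : ℝ≥0∞ :=
  sInf { t : ℝ≥0∞ | ∃ (l : ℕ) (c : Fin l → ℝ) (a : Fin l → E),
    (∀ i, 0 ≤ c i) ∧ (∀ i, a i ∈ A) ∧ x = ∑ i, c i • a i ∧
    t = ENNReal.ofReal (∑ i, c i) }

lemma key_c_eq_one (t c : ℝ) (ht0 : 0 ≤ t) (ht2 : t ≤ 2) (hc : 0 ≤ c)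
    (h1 : c * (t * Real.cos (Real.pi * t)) = 1 / (4 * Real.sqrt 2))
    (h2 : c * (t * Real.sin (Real.pi * t)) = 1 / (4 * Real.sqrt 2)) : c = 1 := by
  have hs2 : Real.sqrt 2 ^ 2 = 2 := Real.sq_sqrt (by norm_num)
  have hs2pos : 0 < Real.sqrt 2 := Real.sqrt_pos.mpr (by norm_num)
  have hrhs : (0:ℝ) < 1 / (4 * Real.sqrt 2) := by positivity
  have hpi : 0 < Real.pi := Real.pi_pos
  set θ := Real.pi * t with hθ
  have hctcos : 0 < c * t * Real.cos θ := by rw [mul_assoc, h1]; exact hrhs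
  have hct : 0 < c * t := by
    rcases lt_or_ge 0 (c * t) with h | h
    · exact h
    · nlinarith [Real.neg_one_le_cos θ, Real.cos_le_one θ]
  have hcos : 0 < Real.cos θ := by nlinarith
  have heq : Real.cos θ = Real.sin θ := by
    have : c * t * Real.cos θ = c * t * Real.sin θ := by
      rw [mul_assoc, mul_assoc, h1, h2]
    exact mul_left_cancel₀ (ne_of_gt hct) this
  have hsin0 : Real.sin (θ - Real.pi / 4) = 0 := by
    rw [Real.sin_sub, Real.sin_pi_div_four, Real.cos_pi_div_four, heq]; ring
  obtain ⟨n, hn⟩ := Real.sin_eq_zero_iff.mp hsin0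
  have htpos : 0 < t := by nlinarith
  have hθle : θ ≤ 2 * Real.pi := by rw [hθ]; nlinarith
  have hθpos : 0 < θ := by rw [hθ]; positivity
  have hn0 : (0:ℤ) ≤ n := by
    by_contra h
    push_neg at h
    have : (n:ℝ) ≤ -1 := by exact_mod_cast (by omega : n ≤ -1)
    nlinarith
  have hn1 : n ≤ 1 := by
    by_contra h
    push_neg at h
    have : (2:ℝ) ≤ (n:ℝ) := by exact_mod_cast h
    nlinarith
  interval_cases n
  · have hθval : θ = Real.pi / 4 := by push_cast at hn; linarith
    have htval : t = 1 / 4 := by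
      have := hθval
      rw [hθ] at this
      field_simp at this
      nlinarith
    rw [hθval, Real.cos_pi_div_four] at hcos
    have h1' := h1
    rw [hθ] at h1'
    rw [htval] at h1'
    have : Real.pi * (1/4) = Real.pi / 4 := by ring
    rw [this, Real.cos_pi_div_four] at h1'
    have h8 : c * (Real.sqrt 2 / 8) = 1 / (4 * Real.sqrt 2) := by linarith [h1']
    field_simp at h8
    nlinarith
  · exfalso
    have hθval : θ = 5 * Real.pi / 4 := by push_cast at hn; linarith
    have : Real.cos θ < 0 := by
      rw [hθval]
      have : (5:ℝ) * Real.pi / 4 = Real.pi + Real.pi / 4 := by ring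
      rw [this, Real.cos_add, Real.cos_pi, Real.sin_pi, Real.cos_pi_div_four, Real.sin_pi_div_four]
      nlinarith
    linarith

/-- For the spiral alphabet `A = {(t cos(πt), t sin(πt)) : t ∈ [0,2]} ⊆ ℝ²` and the 1-sparse
model `x♯ = (1/(4√2))·(1,1) ∈ A`, the gauge function satisfies
`G_A(x♯) ≤ 5/(8√2) < 1 = G_{A,1}(x♯)`; in particular `G_A(x♯) < G_{A,1}(x♯)`. -/
theorem spiral_gauge_fails (A : Set (ℝ × ℝ))
    (hA : A = { x | ∃ t ∈ Set.Icc (0 : ℝ) 2,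
      x = (t * Real.cos (Real.pi * t), t * Real.sin (Real.pi * t)) })
    (xs : ℝ × ℝ) (hxs : xs = (1 / (4 * Real.sqrt 2), 1 / (4 * Real.sqrt 2))) :
    gaugeSum A xs ≤ ENNReal.ofReal (5 / (8 * Real.sqrt 2)) ∧
    (5 / (8 * Real.sqrt 2) : ℝ) < 1 ∧
    gaugep A 1 xs = 1 ∧
    gaugeSum A xs < gaugep A 1 xs := by
  have hs2 : Real.sqrt 2 ^ 2 = 2 := Real.sq_sqrt (by norm_num)
  have hs2pos : 0 < Real.sqrt 2 := Real.sqrt_pos.mpr (by norm_num)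
  have hs2ne : Real.sqrt 2 ≠ 0 := ne_of_gt hs2pos
  -- Part 2
  have part2 : (5 / (8 * Real.sqrt 2) : ℝ) < 1 := by
    rw [div_lt_one (by positivity)]
    nlinarith
  -- Part 1
  have part1 : gaugeSum A xs ≤ ENNReal.ofReal (5 / (8 * Real.sqrt 2)) := by
    apply sInf_le
    refine ⟨2, ![1/(2*Real.sqrt 2), 1/(8*Real.sqrt 2)], ![(0, 1/2), (2, 0)], ?_, ?_, ?_, ?_⟩
    · intro i; fin_cases i <;> simp <;> positivity
    · intro i
      rw [hA]
      fin_cases i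
      · refine ⟨1/2, ⟨by norm_num, by norm_num⟩, ?_⟩
        have h : Real.pi * (1/2) = Real.pi / 2 := by ring
        simp only [h, Real.cos_pi_div_two, Real.sin_pi_div_two]
        norm_num
      · refine ⟨2, ⟨by norm_num, le_refl 2⟩, ?_⟩
        have h : Real.pi * 2 = 2 * Real.pi := by ring
        simp only [h, Real.cos_two_pi, Real.sin_two_pi]
        norm_num
    · rw [hxs, Fin.sum_univ_two]
      simp only [Matrix.cons_val_zero, Matrix.cons_val_one, Matrix.head_cons, Prod.smul_mk,
        smul_eq_mul, Prod.mk_add_mk, Prod.mk.injEq]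
      constructor <;> · field_simp; ring
    · rw [Fin.sum_univ_two]
      congr 1
      simp only [Matrix.cons_val_zero, Matrix.cons_val_one, Matrix.head_cons]
      field_simp
      ring
  -- Part 3
  have hxsA : xs ∈ A := by
    rw [hA, hxs]
    refine ⟨1/4, ⟨by norm_num, by norm_num⟩, ?_⟩
    have h : Real.pi * (1/4) = Real.pi / 4 := by ring
    simp only [h, Real.cos_pi_div_four, Real.sin_pi_div_four]
    have : (1:ℝ) / (4 * Real.sqrt 2) = 1/4 * (Real.sqrt 2 / 2) := by
      rw [div_eq_iff (by positivity)]
      nlinarith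
    rw [this]
  have part3 : gaugep A 1 xs = 1 := by
    apply le_antisymm
    · apply sInf_le
      refine ⟨![1], ![xs], by intro i; fin_cases i; norm_num, by intro i; fin_cases i; exact hxsA,
        ?_, ?_⟩
      · simp [Fin.sum_univ_one]
      · simp [Fin.sum_univ_one]
    · apply le_sInf
      rintro b ⟨c, a, hc, ha, hsum, hb⟩
      have h0 := ha 0
      rw [hA] at h0
      obtain ⟨t, ht, hat⟩ := h0
      rw [Fin.sum_univ_one, hat, hxs] at hsum
      simp only [Prod.smul_mk, smul_eq_mul, Prod.mk.injEq] at hsum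
      have hc1 : c 0 = 1 := key_c_eq_one t (c 0) ht.1 ht.2 (hc 0) hsum.1.symm hsum.2.symm
      rw [hb, Fin.sum_univ_one, hc1]
      simp
  refine ⟨part1, part2, part3, ?_⟩
  calc gaugeSum A xs ≤ ENNReal.ofReal (5 / (8 * Real.sqrt 2)) := part1
    _ < 1 := ENNReal.ofReal_lt_one.mpr part2
    _ = gaugep A 1 xs := part3.symm
end
end
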